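/- (Pairing Strategy) Let G=(V,E_L,E_R) be an achievement positional game. If the hypergraph (V,E_L) admits a complete pairing, then Right has a non-losing strategy on G as first player and also as second player. -/

import Mathlib

namespace APG

/-- The two players: Left and Right. -/
inductive Player : Type
  | L : Player
  | R : Player
deriving DecidableEq, Repr

/-- The opponent of a player. -/
def Player.other : Player → Player
  | .L => .R
  | .R => .L

/-- An achievement positional game: a finite vertex set together with the set of
blue edges (Left's winning sets) and the set of red edges (Right's winning sets). -/
structure Game : Type where
  V : Finset ℕ
  EL : Finset (Finset ℕ)
  ER : Finset (Finset ℕ)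

/-- The edges are nonempty subsets of the vertex set. -/
def WellFormed (G : Game) : Prop :=
  (∀ e ∈ G.EL, e ⊆ G.V ∧ e.Nonempty) ∧ (∀ e ∈ G.ER, e ⊆ G.V ∧ e.Nonempty)

/-- The winning sets of a given player. -/
def Game.edges (G : Game) : Player → Finset (Finset ℕ)
  | .L => G.EL
  | .R => G.ER

/-- The player who makes the `i`-th move (0-indexed) when `s` moves first. -/
def mover (s : Player) (i : ℕ) : Player := if i % 2 = 0 then s else s.other

/-- The set of vertices picked by player `p` along the history `h`
(the chronological list of the moves played so far), when `s` moved first. -/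
def picked (s p : Player) (h : List ℕ) : Finset ℕ :=
  ((Finset.range h.length).filter fun i => mover s i = p).image fun i => h.getD i 0

/-- The set `S` of picked vertices fills some edge of `E`. -/
def fills (E : Finset (Finset ℕ)) (S : Finset ℕ) : Prop := ∃ e ∈ E, e ⊆ S

/-- The game is over: some player has picked all the vertices of one of their edges. -/
def ended (G : Game) (s : Player) (h : List ℕ) : Prop :=
  fills G.EL (picked s .L h) ∨ fills G.ER (picked s .R h)

/-- `h` is a legal history: no vertex is picked twice, every picked vertex belongs to
the board, and no move is made after the game has ended. -/
def ValidHist (G : Game) (s : Player) (h : List ℕ) : Prop :=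
  h.Nodup ∧ (∀ x ∈ h, x ∈ G.V) ∧ ∀ k, k < h.length → ¬ ended G s (h.take k)

/-- A strategy: a map assigning to each position (history) a vertex to pick. -/
abbrev Strategy := List ℕ → ℕ

/-- Along `h`, every move of player `p` agrees with the strategy `σ`. -/
def Follows (s p : Player) (σ : Strategy) (h : List ℕ) : Prop :=
  ∀ k, k < h.length → mover s k = p → h.getD k 0 = σ (h.take k)

/-- A finished play: either the game has ended or all vertices have been picked. -/
def Complete (G : Game) (s : Player) (h : List ℕ) : Prop :=
  ended G s h ∨ h.length = G.V.card

/-- The strategy `σ` of player `p` always suggests a legal move (an unpicked vertex)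
whenever the game is not over and it is `p`'s turn. -/
def Legal (G : Game) (s p : Player) (σ : Strategy) : Prop :=
  ∀ h, ValidHist G s h → Follows s p σ h → ¬ ended G s h → h.length < G.V.card →
    mover s h.length = p → σ h ∈ G.V ∧ σ h ∉ h

/-- Player `p` has a winning strategy on `G` when `s` moves first: following it,
every finished play ends with `p` having filled one of their edges (and, the game
having ended right there, the opponent has not filled an edge first). -/
def WinsAs (G : Game) (s p : Player) : Prop :=
  ∃ σ : Strategy, Legal G s p σ ∧
    ∀ h, ValidHist G s h → Follows s p σ h → Complete G s h →
      fills (G.edges p) (picked s p h)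

/-- Player `p` has a non-losing strategy on `G` when `s` moves first: following it,
the opponent never fills one of their edges. -/
def NonLosingAs (G : Game) (s p : Player) : Prop :=
  ∃ σ : Strategy, Legal G s p σ ∧
    ∀ h, ValidHist G s h → Follows s p σ h → Complete G s h →
      ¬ fills (G.edges p.other) (picked s p.other h)

/-- The possible results of the game, for a fixed starting player. -/
inductive Result : Type
  | Lwin : Result
  | draw : Result
  | Rwin : Result
deriving DecidableEq, Repr

/-- The result of `G` with optimal play, when `s` moves first, is `r`:
a win for a player means that player has a winning strategy, a draw means
both players have non-losing strategies. -/
def resultIs (G : Game) (s : Player) : Result → Prop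
  | .Lwin => WinsAs G s .L
  | .Rwin => WinsAs G s .R
  | .draw => NonLosingAs G s .L ∧ NonLosingAs G s .R

/-- An outcome: the pair of results with optimal play
(when Left starts, when Right starts). -/
abbrev Outcome := Result × Result

/-- `G` has outcome `o`. -/
def hasOutcome (G : Game) (o : Outcome) : Prop :=
  resultIs G .L o.1 ∧ resultIs G .R o.2

/-- Numerical value of a result, from Left's point of view:
Right wins < draw < Left wins. -/
def Result.val : Result → ℕ
  | .Rwin => 0
  | .draw => 1
  | .Lwin => 2

/-- The partial order `≤_L` on outcomes, comparing both components simultaneously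
from Left's point of view. -/
def outLE (o o' : Outcome) : Prop := o.1.val ≤ o'.1.val ∧ o.2.val ≤ o'.2.val

def oL : Outcome := (.Lwin, .Lwin)
def oLminus : Outcome := (.Lwin, .draw)
def oN : Outcome := (.Lwin, .Rwin)
def oD : Outcome := (.draw, .draw)
def oRminus : Outcome := (.draw, .Rwin)
def oR : Outcome := (.Rwin, .Rwin)

/-- The updated game `G_u` after Left has picked `u`. -/
def subL (G : Game) (u : ℕ) : Game where
  V := G.V.erase u
  EL := G.EL.image fun e => e.erase u
  ER := G.ER.filter fun e => u ∉ e

/-- The updated game `G^u` after Right has picked `u`. -/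
def subR (G : Game) (u : ℕ) : Game where
  V := G.V.erase u
  EL := G.EL.filter fun e => u ∉ e
  ER := G.ER.image fun e => e.erase u

/-- The updated game `G_u^v` after Left has picked `u` and Right has picked `v`. -/
def updLR (G : Game) (u v : ℕ) : Game where
  V := (G.V.erase u).erase v
  EL := (G.EL.filter fun e => v ∉ e).image fun e => e.erase u
  ER := (G.ER.filter fun e => u ∉ e).image fun e => e.erase v

/-- The disjoint union of two games. -/
def gunion (G G' : Game) : Game where
  V := G.V ∪ G'.V
  EL := G.EL ∪ G'.EL
  ER := G.ER ∪ G'.ER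

/-!
Right answers each move of Left inside a pair of `P` by the other vertex of that pair, if it
is still free. Hence, whenever Left is to move, every pair met by Left is also met by Right;
since every blue edge contains a pair, Left never owns all vertices of a blue edge.
-/

lemma mem_picked {s p : Player} {h : List ℕ} {x : ℕ} :
    x ∈ picked s p h ↔ ∃ i < h.length, mover s i = p ∧ h.getD i 0 = x := by
  simp [picked, and_assoc]

lemma picked_nil (s p : Player) : picked s p [] = ∅ := by
  simp [picked]

lemma mover_succ (s : Player) (n : ℕ) : mover s (n + 1) = (mover s n).other := by
  unfold mover
  rcases Nat.mod_two_eq_zero_or_one n with hn | hn <;> cases s <;>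
    simp [hn, Nat.add_mod] <;> rfl

lemma mem_of_mem_picked {s p : Player} {h : List ℕ} {x : ℕ} (hx : x ∈ picked s p h) :
    x ∈ h := by
  obtain ⟨i, hi, -, rfl⟩ := mem_picked.mp hx
  rw [List.getD_eq_getElem h 0 hi]
  exact List.getElem_mem hi

lemma mem_picked_or_mem_picked {s : Player} {h : List ℕ} {x : ℕ} (hx : x ∈ h) :
    x ∈ picked s .L h ∨ x ∈ picked s .R h := by
  obtain ⟨i, hi, rfl⟩ := List.mem_iff_getElem.mp hx
  have hget : h.getD i 0 = h[i] := List.getD_eq_getElem h 0 hi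
  cases hm : mover s i
  · exact .inl (mem_picked.mpr ⟨i, hi, hm, hget⟩)
  · exact .inr (mem_picked.mpr ⟨i, hi, hm, hget⟩)

lemma disjoint_picked {s : Player} {h : List ℕ} (hh : h.Nodup) :
    Disjoint (picked s .L h) (picked s .R h) := by
  refine Finset.disjoint_left.mpr fun x hL hR => ?_
  obtain ⟨i, hi, hmi, hgi⟩ := mem_picked.mp hL
  obtain ⟨j, hj, hmj, hgj⟩ := mem_picked.mp hR
  rw [List.getD_eq_getElem h 0 hi] at hgi
  rw [List.getD_eq_getElem h 0 hj] at hgj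
  obtain rfl : i = j := (hh.getElem_inj_iff).mp (hgi.trans hgj.symm)
  exact Player.noConfusion (hmi.symm.trans hmj)

lemma picked_append_singleton (s p : Player) (l : List ℕ) (x : ℕ) :
    picked s p (l ++ [x]) =
      if mover s l.length = p then insert x (picked s p l) else picked s p l := by
  have hlast : (l ++ [x]).getD l.length 0 = x := by simp
  have hinit : ∀ i < l.length, (l ++ [x]).getD i 0 = l.getD i 0 := fun i hi =>
    List.getD_append l [x] 0 i hi
  ext y
  split_ifs with hm
  · simp only [Finset.mem_insert, mem_picked, List.length_append, List.length_singleton,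
      Nat.lt_succ_iff_lt_or_eq]
    constructor
    · rintro ⟨i, hi | rfl, hmi, rfl⟩
      · exact .inr ⟨i, hi, hmi, (hinit i hi).symm⟩
      · exact .inl hlast
    · rintro (rfl | ⟨i, hi, hmi, rfl⟩)
      · exact ⟨l.length, .inr rfl, hm, hlast⟩
      · exact ⟨i, .inl hi, hmi, hinit i hi⟩
  · simp only [mem_picked, List.length_append, List.length_singleton, Nat.lt_succ_iff_lt_or_eq]
    constructor
    · rintro ⟨i, hi | rfl, hmi, rfl⟩
      · exact ⟨i, hi, hmi, (hinit i hi).symm⟩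
      · exact absurd hmi hm
    · rintro ⟨i, hi, hmi, rfl⟩
      exact ⟨i, .inl hi, hmi, hinit i hi⟩

lemma ValidHist.of_append {G : Game} {s : Player} {l : List ℕ} {x : ℕ}
    (hv : ValidHist G s (l ++ [x])) : ValidHist G s l := by
  obtain ⟨hnd, hmem, hend⟩ := hv
  refine ⟨hnd.sublist (List.sublist_append_left l [x]), fun y hy => hmem y (by simp [hy]),
    fun k hk => ?_⟩
  simpa [List.take_append_of_le_length hk.le] using hend k (by simp; omega)

lemma Follows.of_append {s p : Player} {σ : Strategy} {l : List ℕ} {x : ℕ}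
    (hf : Follows s p σ (l ++ [x])) : Follows s p σ l := by
  intro k hk hm
  have := hf k (by simp; omega) hm
  rwa [List.getD_append l [x] 0 k hk, List.take_append_of_le_length hk.le] at this

lemma Follows.eq_of_append {s p : Player} {σ : Strategy} {l : List ℕ} {x : ℕ}
    (hf : Follows s p σ (l ++ [x])) (hp : mover s l.length = p) : x = σ l := by
  simpa using hf l.length (by simp) hp

open Classical in
noncomputable def pairingStrategy (V : Finset ℕ) (P : Finset (Finset ℕ)) : Strategy := fun h =>
  if hy : ∃ y ∉ h, ∃ x ∈ h.getLast?, {x, y} ∈ P then hy.choose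
  else if hv : ∃ v ∈ V, v ∉ h then hv.choose else 0

lemma pairingStrategy_spec_of_exists {V : Finset ℕ} {P : Finset (Finset ℕ)} {h : List ℕ}
    (hy : ∃ y ∉ h, ∃ x ∈ h.getLast?, {x, y} ∈ P) :
    pairingStrategy V P h ∉ h ∧ ∃ x ∈ h.getLast?, {x, pairingStrategy V P h} ∈ P := by
  rw [pairingStrategy, dif_pos hy]
  exact hy.choose_spec

lemma pairingStrategy_legal {G : Game} {P : Finset (Finset ℕ)} (hPV : ∀ p ∈ P, p ⊆ G.V)
    (s p : Player) : Legal G s p (pairingStrategy G.V P) := by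
  intro h hv _ _ hlen _
  by_cases hy : ∃ y ∉ h, ∃ x ∈ h.getLast?, {x, y} ∈ P
  · obtain ⟨hfree, x, -, hxy⟩ := pairingStrategy_spec_of_exists (V := G.V) hy
    exact ⟨hPV _ hxy (by simp), hfree⟩
  · have hfree : ∃ v ∈ G.V, v ∉ h := by
      simpa using Finset.exists_mem_notMem_of_card_lt_card
        (s := h.toFinset) (by rwa [List.toFinset_card_of_nodup hv.1])
    rw [pairingStrategy, dif_neg hy, dif_pos hfree]
    exact hfree.choose_spec

def PairingInvariant (s : Player) (P : Finset (Finset ℕ)) (h : List ℕ) : Prop :=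
  ∀ p ∈ P, ∀ a ∈ p, a ∈ picked s .L h →
    (∃ b ∈ p, b ∈ picked s .R h) ∨
      (mover s h.length = .R ∧ ∃ x ∈ h.getLast?, x ∈ p ∧ ∃ y ∈ p, y ∉ h)

section PairingInvariant

variable {s : Player} {P : Finset (Finset ℕ)} {l : List ℕ} {x : ℕ}

lemma pairingInvariant_nil : PairingInvariant s P [] := by
  simp [PairingInvariant, picked_nil]

lemma PairingInvariant.append_left (hP2 : ∀ p ∈ P, p.card = 2) (hinv : PairingInvariant s P l)
    (hm : mover s l.length = .L) : PairingInvariant s P (l ++ [x]) := by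
  have hmR : mover s (l ++ [x]).length = .R := by simp [mover_succ, hm, Player.other]
  intro p hp a ha haL
  rw [picked_append_singleton, if_pos hm] at haL
  rw [picked_append_singleton, if_neg (by simp [hm])]
  by_cases hR : ∃ b ∈ p, b ∈ picked s .R l
  · exact .inl hR
  have hL : ∀ c ∈ p, c ∉ picked s .L l := fun c hc hcL =>
    ((hinv p hp c hc hcL).resolve_left hR).1.symm.trans hm |> Player.noConfusion
  obtain rfl : a = x := (Finset.mem_insert.mp haL).resolve_right (hL a ha)
  obtain ⟨y, hy, hya⟩ := Finset.exists_mem_ne (by rw [hP2 p hp]; norm_num) a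
  have hyl : y ∉ l := fun hyl => (mem_picked_or_mem_picked (s := s) hyl).elim
    (hL y hy) (fun hyR => hR ⟨y, hy, hyR⟩)
  exact .inr ⟨hmR, a, by simp, ha, y, hy, by simp [hyl, hya]⟩

lemma PairingInvariant.append_right (hP2 : ∀ p ∈ P, p.card = 2)
    (hdisj : ∀ p ∈ P, ∀ q ∈ P, p ≠ q → Disjoint p q) {V : Finset ℕ}
    (hinv : PairingInvariant s P l) (hm : mover s l.length = .R)
    (hx : x = pairingStrategy V P l) : PairingInvariant s P (l ++ [x]) := by
  intro p hp a ha haL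
  rw [picked_append_singleton, if_neg (by simp [hm])] at haL
  rw [picked_append_singleton, if_pos hm]
  refine .inl ?_
  by_cases hR : ∃ b ∈ p, b ∈ picked s .R l
  · obtain ⟨b, hb, hbR⟩ := hR
    exact ⟨b, hb, Finset.mem_insert_of_mem hbR⟩
  obtain ⟨-, z, hz, hzp, y, hyp, hyl⟩ := (hinv p hp a ha haL).resolve_left hR
  have hzy : {z, y} = p :=
    Finset.eq_of_subset_of_card_le (by simp [Finset.insert_subset_iff, hzp, hyp])
      (by rw [hP2 p hp, Finset.card_pair (by rintro rfl; exact hyl (List.mem_of_getLast? hz))])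
  obtain ⟨-, z', hz', hz'x⟩ :=
    pairingStrategy_spec_of_exists (V := V) ⟨y, hyl, z, hz, hzy ▸ hp⟩
  obtain rfl : z' = z := Option.mem_unique hz' hz
  rw [← hx] at hz'x
  have hxp : {z', x} = p := by
    by_contra hne
    exact Finset.disjoint_left.mp (hdisj _ hz'x p hp hne) (by simp) hzp
  exact ⟨x, hxp ▸ by simp, Finset.mem_insert_self _ _⟩

end PairingInvariant

lemma pairingInvariant_of_follows {G : Game} {s : Player} {P : Finset (Finset ℕ)}
    (hP2 : ∀ p ∈ P, p.card = 2) (hdisj : ∀ p ∈ P, ∀ q ∈ P, p ≠ q → Disjoint p q)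
    {h : List ℕ} (hv : ValidHist G s h) (hf : Follows s .R (pairingStrategy G.V P) h) :
    PairingInvariant s P h := by
  induction h using List.reverseRecOn with
  | nil => exact pairingInvariant_nil
  | append_singleton l x ih =>
    have hinv := ih hv.of_append hf.of_append
    cases hm : mover s l.length
    · exact hinv.append_left hP2 hm
    · exact hinv.append_right hP2 hdisj hm (hf.eq_of_append hm)

lemma PairingInvariant.not_fills {s : Player} {P E : Finset (Finset ℕ)} {h : List ℕ}
    (hP2 : ∀ p ∈ P, p.card = 2) (hcover : ∀ e ∈ E, ∃ p ∈ P, p ⊆ e) (hh : h.Nodup)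
    (hinv : PairingInvariant s P h) : ¬ fills E (picked s .L h) := by
  rintro ⟨e, he, heL⟩
  obtain ⟨p, hp, hpe⟩ := hcover e he
  have hpL : p ⊆ picked s .L h := hpe.trans heL
  obtain ⟨a, ha⟩ := Finset.card_pos.mp (by rw [hP2 p hp]; norm_num : 0 < p.card)
  rcases hinv p hp a ha (hpL ha) with ⟨b, hb, hbR⟩ | ⟨-, -, -, -, y, hy, hyh⟩
  · exact Finset.disjoint_left.mp (disjoint_picked hh) (hpL hb) hbR
  · exact hyh (mem_of_mem_picked (hpL hy))

theorem pairing_strategy_general (G : Game) (P : Finset (Finset ℕ))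
    (hpairs : ∀ p ∈ P, p.card = 2 ∧ p ⊆ G.V)
    (hdisj : ∀ p ∈ P, ∀ q ∈ P, p ≠ q → Disjoint p q)
    (hcover : ∀ e ∈ G.EL, ∃ p ∈ P, p ⊆ e) :
    NonLosingAs G .R .R ∧ NonLosingAs G .L .R := by
  have hP2 : ∀ p ∈ P, p.card = 2 := fun p hp => (hpairs p hp).1
  have nonLosing (s : Player) : NonLosingAs G s .R :=
    ⟨pairingStrategy G.V P, pairingStrategy_legal (fun p hp => (hpairs p hp).2) s .R,
      fun _ hv hf _ => (pairingInvariant_of_follows hP2 hdisj hv hf).not_fills hP2 hcover hv.1⟩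
  exact ⟨nonLosing .R, nonLosing .L⟩

/-- Pairing strategy: if the blue hypergraph admits a complete pairing, then Right has
a non-losing strategy on `G`, both as first player and as second player. -/
theorem pairing_strategy (G : Game) (hG : WellFormed G) (P : Finset (Finset ℕ))
    (hpairs : ∀ p ∈ P, p.card = 2 ∧ p ⊆ G.V)
    (hdisj : ∀ p ∈ P, ∀ q ∈ P, p ≠ q → Disjoint p q)
    (hcover : ∀ e ∈ G.EL, ∃ p ∈ P, p ⊆ e) :
    NonLosingAs G .R .R ∧ NonLosingAs G .L .R :=
  pairing_strategy_general G P hpairs hdisj hcover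

end APG
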